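/- If f, h : G → U_t are unitary-matrix-valued functions on a finite group G, then the function ψ(a) = ‖(h*f)(a)‖²_HS has Fourier algebra norm at most t: ‖ψ‖_A ≤ t. -/

import Mathlib

open scoped Kronecker ComplexOrder
open Finset Matrix

attribute [local instance] Classical.propDecidable

noncomputable section

def hsNormSq {m n : Type*} [Fintype m] [Fintype n] (A : Matrix m n ℂ) : ℝ :=
  ∑ i, ∑ j, Complex.normSq (A i j)

def vnorm {n : ℕ} (u : Fin n → ℂ) : ℝ := Real.sqrt (∑ i, Complex.normSq (u i))

def opNorm {d : ℕ} (M : Matrix (Fin d) (Fin d) ℂ) : ℝ :=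
  ‖Matrix.toEuclideanCLM (𝕜 := ℂ) M‖

def traceNorm {m : Type*} [Fintype m] [DecidableEq m] (A : Matrix m m ℂ) : ℝ :=
  (((Matrix.posSemidef_conjTranspose_mul_self A).1.eigenvectorUnitary : Matrix m m ℂ) *
    diagonal (((↑) : ℝ → ℂ) ∘ Real.sqrt ∘ (Matrix.posSemidef_conjTranspose_mul_self A).1.eigenvalues) *
    (star (Matrix.posSemidef_conjTranspose_mul_self A).1.eigenvectorUnitary : Matrix m m ℂ)).trace.re

variable {G : Type*} [Group G] [Fintype G]

def conv {t : ℕ} (f g : G → Matrix (Fin t) (Fin t) ℂ) (x : G) : Matrix (Fin t) (Fin t) ℂ :=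
  (Fintype.card G : ℂ)⁻¹ • ∑ y, f (x * y⁻¹) * g y

def adjFun {t : ℕ} (f : G → Matrix (Fin t) (Fin t) ℂ) (x : G) : Matrix (Fin t) (Fin t) ℂ :=
  (f x⁻¹)ᴴ

def fourierMat {t d : ℕ} (f : G → Matrix (Fin t) (Fin t) ℂ)
    (ρ : G →* Matrix.unitaryGroup (Fin d) ℂ) : Matrix (Fin t × Fin d) (Fin t × Fin d) ℂ :=
  (Fintype.card G : ℂ)⁻¹ • ∑ x, (f x) ⊗ₖ (ρ x : Matrix (Fin d) (Fin d) ℂ)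

def l2sq {t : ℕ} (f : G → Matrix (Fin t) (Fin t) ℂ) : ℝ :=
  (Fintype.card G : ℝ)⁻¹ * ∑ x, hsNormSq (f x)

def u2pow4 {t : ℕ} (f : G → Matrix (Fin t) (Fin t) ℂ) : ℝ := l2sq (conv (adjFun f) f)

def IsIrred {d : ℕ} (ρ : G →* Matrix.unitaryGroup (Fin d) ℂ) : Prop :=
  ∀ M : Matrix (Fin d) (Fin d) ℂ,
    (∀ g, (ρ g : Matrix (Fin d) (Fin d) ℂ) * M = M * (ρ g : Matrix (Fin d) (Fin d) ℂ)) →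
    ∃ c : ℂ, M = c • (1 : Matrix (Fin d) (Fin d) ℂ)

def IsNontrivialRep {d : ℕ} (ρ : G →* Matrix.unitaryGroup (Fin d) ℂ) : Prop :=
  ∃ g, (ρ g : Matrix (Fin d) (Fin d) ℂ) ≠ 1

def IsBiased (S : Finset G) (ε : ℝ) : Prop :=
  S.Nonempty ∧ ∀ (d : ℕ) (ρ : G →* Matrix.unitaryGroup (Fin d) ℂ),
    IsIrred ρ → IsNontrivialRep ρ →
    opNorm ((S.card : ℂ)⁻¹ • ∑ s ∈ S, (ρ s : Matrix (Fin d) (Fin d) ℂ)) ≤ ε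

def Tmat (f : G → ℂ) : Matrix G G ℂ := fun x y => f (x⁻¹ * y) / (Fintype.card G : ℂ)

/-!
Substituting `y = z⁻¹ a` gives `(h * f)(a) = |G|⁻¹ ∑_z h(z) F(a⁻¹ z)ᴴ` with `F = adjFun f`, and
expanding `‖M‖²_HS = tr (Mᴴ M)` yields
`ψ(a) = ∑_{(z, z')} ⟪U(z, z'), V(a⁻¹ z, a⁻¹ z')⟫_HS`, where `U(z, z') = |G|⁻¹ h(z')ᴴ h(z)` and
`V(z, z') = |G|⁻¹ F(z')ᴴ F(z)`. So `ψ` is a matrix coefficient of the permutation representation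
of `G` on `G × G` (diagonal left translation), tensored with `t × t` matrices. Every `U(z, z')` and
`V(z, z')` is `|G|⁻¹` times a unitary matrix, of squared Hilbert–Schmidt norm `|G|⁻² t`; summing
over the `|G|²` pairs gives `‖U‖² = ‖V‖² = t`.
-/

section PermutationMatrix

variable (R : Type*) [CommRing R] [StarRing R] (X : Type*) [Fintype X] [DecidableEq X]

def permUnitaryHom : Equiv.Perm X →* unitaryGroup X R :=
  (permMatrixHom (R := R)).codRestrict _ fun σ => by
    rw [mem_unitaryGroup_iff', permMatrixHom_apply, star_eq_conjTranspose,
      conjTranspose_permMatrix, ← permMatrix_mul, mul_inv_cancel, permMatrix_one]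

variable {R X} in
lemma permUnitaryHom_mulVec (σ : Equiv.Perm X) (v : X → R) :
    (permUnitaryHom R X σ : Matrix X X R) *ᵥ v = v ∘ ⇑σ⁻¹ :=
  permMatrix_mulVec _

end PermutationMatrix

section PermutationRepresentation

@[simps]
def prodCongrLeftHom (X Y : Type*) : Equiv.Perm X →* Equiv.Perm (X × Y) where
  toFun σ := σ.prodCongr (Equiv.refl Y)
  map_one' := rfl
  map_mul' _ _ := rfl

variable (Γ X Y : Type*) [Group Γ] [Fintype X] [Fintype Y] [MulAction Γ X]

def permRep : Γ →* unitaryGroup (Fin (Fintype.card (X × Y))) ℂ :=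
  (permUnitaryHom ℂ _).comp <| (Fintype.equivFin (X × Y)).permCongrHom.toMonoidHom.comp <|
    (prodCongrLeftHom X Y).comp (MulAction.toPermHom Γ X)

variable {Γ X Y}

lemma permRep_mulVec (w : X × Y → ℂ) (a : Γ) :
    (permRep Γ X Y a : Matrix _ _ ℂ) *ᵥ (w ∘ (Fintype.equivFin (X × Y)).symm)
      = (fun p => w (a⁻¹ • p.1, p.2)) ∘ (Fintype.equivFin (X × Y)).symm := by
  rw [permRep, MonoidHom.comp_apply, permUnitaryHom_mulVec, ← map_inv]
  ext i
  simp [Equiv.permCongr_apply, Prod.map]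

lemma permRep_coeff (u v : X → Y → ℂ) (a : Γ) :
    ∑ i, star (Function.uncurry u ((Fintype.equivFin (X × Y)).symm i)) *
      ((permRep Γ X Y a : Matrix _ _ ℂ) *ᵥ (Function.uncurry v ∘ (Fintype.equivFin (X × Y)).symm)) i
      = ∑ x, star (u x) ⬝ᵥ v (a⁻¹ • x) := by
  rw [permRep_mulVec]
  exact (Equiv.sum_comp _ fun p => star (Function.uncurry u p) * v (a⁻¹ • p.1) p.2).trans
    (Fintype.sum_prod_type _)

lemma exists_unitaryRep_coeff_eq (u v : X → Y → ℂ) :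
    ∃ (n : ℕ) (π : Γ →* unitaryGroup (Fin n) ℂ) (u' v' : Fin n → ℂ),
      (∀ a, ∑ i, starRingEnd ℂ (u' i) * ((π a : Matrix (Fin n) (Fin n) ℂ) *ᵥ v') i
        = ∑ x, star (u x) ⬝ᵥ v (a⁻¹ • x)) ∧
      vnorm u' = √(∑ x, ∑ y, Complex.normSq (u x y)) ∧
      vnorm v' = √(∑ x, ∑ y, Complex.normSq (v x y)) := by
  have hnorm : ∀ w : X → Y → ℂ, vnorm (Function.uncurry w ∘ (Fintype.equivFin (X × Y)).symm)
      = √(∑ x, ∑ y, Complex.normSq (w x y)) := fun w => by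
    rw [vnorm, ← Fintype.sum_prod_type']
    exact congrArg _ (Equiv.sum_comp _ fun p => Complex.normSq (Function.uncurry w p))
  exact ⟨_, permRep Γ X Y, _, _, permRep_coeff u v, hnorm u, hnorm v⟩

end PermutationRepresentation

section HilbertSchmidt

variable {m n k ι : Type*} [Fintype m] [Fintype n] [Fintype k] [Fintype ι]

lemma ofReal_hsNormSq (A : Matrix m n ℂ) : ((hsNormSq A : ℝ) : ℂ) = (Aᴴ * A).trace := by
  rw [← star_vec_dotProduct_vec]
  simp [hsNormSq, dotProduct, Fintype.sum_prod_type, Complex.normSq_eq_conj_mul_self,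
    Finset.sum_comm (γ := m)]

lemma sum_normSq_vec (A : Matrix m n ℂ) : ∑ y, Complex.normSq (vec A y) = hsNormSq A := by
  rw [Fintype.sum_prod_type, Finset.sum_comm]
  rfl

lemma hsNormSq_smul (c : ℂ) (A : Matrix m n ℂ) :
    hsNormSq (c • A) = Complex.normSq c * hsNormSq A := by
  simp [hsNormSq, Finset.mul_sum]

lemma hsNormSq_of_mem_unitaryGroup [DecidableEq n] {U : Matrix n n ℂ}
    (hU : U ∈ unitaryGroup n ℂ) : hsNormSq U = Fintype.card n := by
  have htrace := ofReal_hsNormSq U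
  rw [← star_eq_conjTranspose, mem_unitaryGroup_iff'.mp hU, trace_one] at htrace
  exact_mod_cast htrace

lemma trace_conjTranspose_mul_self_sum_mul_conjTranspose (A : ι → Matrix m k ℂ)
    (B : ι → Matrix n k ℂ) :
    ((∑ i, A i * (B i)ᴴ)ᴴ * ∑ i, A i * (B i)ᴴ).trace
      = ∑ p : ι × ι, (((A p.2)ᴴ * A p.1)ᴴ * ((B p.2)ᴴ * B p.1)).trace := by
  simp only [conjTranspose_sum, Matrix.sum_mul, Matrix.mul_sum, trace_sum, Fintype.sum_prod_type,
    conjTranspose_mul, conjTranspose_conjTranspose]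
  rw [Finset.sum_comm]
  refine Finset.sum_congr rfl fun z _ => Finset.sum_congr rfl fun z' _ => ?_
  simp only [Matrix.mul_assoc]
  rw [trace_mul_comm (B z)]
  simp only [Matrix.mul_assoc]

end HilbertSchmidt

section Gram

variable {ι n : Type*} [Fintype ι] [Fintype n]

def scaledGram (A : ι → Matrix n n ℂ) (p : ι × ι) : Matrix n n ℂ :=
  (Fintype.card ι : ℂ)⁻¹ • ((A p.2)ᴴ * A p.1)

lemma sum_hsNormSq_scaledGram [Nonempty ι] [DecidableEq n] {A : ι → Matrix n n ℂ}
    (hA : ∀ i, A i ∈ unitaryGroup n ℂ) :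
    ∑ p, hsNormSq (scaledGram A p) = Fintype.card n := by
  have hunit : ∀ p : ι × ι, (A p.2)ᴴ * A p.1 ∈ unitaryGroup n ℂ := fun p =>
    mul_mem (Unitary.star_mem (hA p.2)) (hA p.1)
  simp only [scaledGram, hsNormSq_smul, hsNormSq_of_mem_unitaryGroup (hunit _), Finset.sum_const,
    Finset.card_univ, Fintype.card_prod, Complex.normSq_inv, Complex.normSq_natCast, nsmul_eq_mul]
  have hcard : (Fintype.card ι : ℝ) ≠ 0 := Nat.cast_ne_zero.mpr Fintype.card_ne_zero
  push_cast
  field_simp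

end Gram

lemma adjFun_mem_unitaryGroup {Γ : Type*} [Group Γ] {t : ℕ} {f : Γ → Matrix (Fin t) (Fin t) ℂ}
    (hf : ∀ x, f x ∈ unitaryGroup (Fin t) ℂ) (x : Γ) : adjFun f x ∈ unitaryGroup (Fin t) ℂ :=
  Unitary.star_mem (hf x⁻¹)

lemma conv_eq_sum_mul_inv_mul {t : ℕ} (h f : G → Matrix (Fin t) (Fin t) ℂ) (a : G) :
    conv h f a = (Fintype.card G : ℂ)⁻¹ • ∑ z, h z * f (z⁻¹ * a) := by
  rw [conv]
  congr 1
  exact Fintype.sum_equiv ((Equiv.inv G).trans (Equiv.mulLeft a)) _ _ fun y => by simp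

lemma ofReal_hsNormSq_conv {t : ℕ} (h f : G → Matrix (Fin t) (Fin t) ℂ) (a : G) :
    ((hsNormSq (conv h f a) : ℝ) : ℂ)
      = ∑ p, ((scaledGram h p)ᴴ * scaledGram (adjFun f) (a⁻¹ • p)).trace := by
  have hF : ∀ z, f (z⁻¹ * a) = (adjFun f (a⁻¹ * z))ᴴ := fun z => by simp [adjFun]
  simp_rw [ofReal_hsNormSq, conv_eq_sum_mul_inv_mul, hF]
  rw [conjTranspose_smul, smul_mul_smul, trace_smul,
    trace_conjTranspose_mul_self_sum_mul_conjTranspose, Finset.smul_sum]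
  refine Finset.sum_congr rfl fun p _ => ?_
  rw [scaledGram, scaledGram, conjTranspose_smul, smul_mul_smul, trace_smul]
  rfl

theorem psi_algebra_norm_unitary {G : Type*} [Group G] [Fintype G] {t : ℕ}
    (f h : G → Matrix (Fin t) (Fin t) ℂ)
    (hf : ∀ x, f x ∈ Matrix.unitaryGroup (Fin t) ℂ)
    (hh : ∀ x, h x ∈ Matrix.unitaryGroup (Fin t) ℂ) :
    ∃ (n : ℕ) (π : G →* Matrix.unitaryGroup (Fin n) ℂ) (u v : Fin n → ℂ),
      (∀ a, ((hsNormSq (conv h f a) : ℝ) : ℂ) =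
        ∑ i, (starRingEnd ℂ) (u i) * ((π a : Matrix (Fin n) (Fin n) ℂ).mulVec v) i) ∧
      vnorm u * vnorm v ≤ (t : ℝ) := by
  obtain ⟨n, π, u, v, hcoeff, hu, hv⟩ := exists_unitaryRep_coeff_eq (Γ := G)
    (fun p : G × G => vec (scaledGram h p)) (fun p => vec (scaledGram (adjFun f) p))
  refine ⟨n, π, u, v, fun a => ?_, le_of_eq ?_⟩
  · simp only [hcoeff, ofReal_hsNormSq_conv, star_vec_dotProduct_vec]
  · simp only [hu, hv, sum_normSq_vec, sum_hsNormSq_scaledGram hh,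
      sum_hsNormSq_scaledGram (adjFun_mem_unitaryGroup hf), Fintype.card_fin]
    exact Real.mul_self_sqrt (Nat.cast_nonneg t)
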